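/- arXiv:2411.07724 — 5 statements merged into one kernel-verified Lean document; each statement's English description precedes it below -/
import Mathlib

section
/- Let λ > 0, η > 0 with ηλ ≤ 1, and let θ, c ∈ ℝ^d with θ⁺ = (1 − ηλ)θ − η·sign(c), where sign acts componentwise with sign(0) = 0. Then ‖θ⁺‖_∞ − 1/λ ≤ (1 − ηλ)(‖θ‖_∞ − 1/λ). -/
open MeasureTheory Real Finset

local notation "⟪" x ", " y "⟫" => @inner ℝ _ _ x y

/-- componentwise sign map, with sign 0 = 0. -/
noncomputable def signVec {d : ℕ} (x : EuclideanSpace ℝ (Fin d)) : EuclideanSpace ℝ (Fin d) :=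
  (EuclideanSpace.equiv (Fin d) ℝ).symm fun i => Real.sign (x i)

/-- the ℓ∞ norm on ℝ^d. -/
noncomputable def linfNorm {d : ℕ} (x : EuclideanSpace ℝ (Fin d)) : ℝ :=
  ‖EuclideanSpace.equiv (Fin d) ℝ x‖

/-- the ℓ1 norm on ℝ^d. -/
noncomputable def l1Norm {d : ℕ} (x : EuclideanSpace ℝ (Fin d)) : ℝ :=
  ∑ i, |x i|

lemma signVec_linf_le_one {d : ℕ} (c : EuclideanSpace ℝ (Fin d)) :
    linfNorm (signVec c) ≤ 1 := by
  unfold linfNorm signVec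
  rw [pi_norm_le_iff_of_nonneg one_pos.le]
  intro i
  simp only [EuclideanSpace.equiv, LinearEquiv.coe_mk]
  have := Real.sign_apply_eq (c i)
  rcases this with h | h | h <;> simp [h, abs_le]

theorem lion_box_contraction {d : ℕ} (lam η : ℝ) (hlam : 0 < lam) (hη : 0 < η)
    (hηlam : η * lam ≤ 1) (θ c : EuclideanSpace ℝ (Fin d)) :
    linfNorm ((1 - η * lam) • θ - η • signVec c) - 1 / lam ≤
      (1 - η * lam) * (linfNorm θ - 1 / lam) := by
  have key : linfNorm ((1 - η * lam) • θ - η • signVec c) ≤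
      (1 - η * lam) * linfNorm θ + η * linfNorm (signVec c) := by
    unfold linfNorm
    simp only [map_sub, _root_.map_smul]
    calc ‖(1 - η * lam) • (EuclideanSpace.equiv (Fin d) ℝ θ) -
          η • (EuclideanSpace.equiv (Fin d) ℝ (signVec c))‖
        ≤ ‖(1 - η * lam) • (EuclideanSpace.equiv (Fin d) ℝ θ)‖ +
          ‖η • (EuclideanSpace.equiv (Fin d) ℝ (signVec c))‖ := norm_sub_le _ _
      _ = |1 - η * lam| * ‖(EuclideanSpace.equiv (Fin d) ℝ θ)‖ +
          |η| * ‖(EuclideanSpace.equiv (Fin d) ℝ (signVec c))‖ := by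
            rw [norm_smul, norm_smul]; norm_num
      _ = (1 - η * lam) * ‖(EuclideanSpace.equiv (Fin d) ℝ θ)‖ +
          η * ‖(EuclideanSpace.equiv (Fin d) ℝ (signVec c))‖ := by
            rw [abs_of_nonneg (by linarith), abs_of_nonneg hη.le]
  have h2 := signVec_linf_le_one c
  have hfield : (1 - η * lam) * (linfNorm θ - 1 / lam) =
      (1 - η * lam) * linfNorm θ + η - 1/lam := by
    field_simp
    ring
  rw [hfield]
  nlinarith
end

section
/- Let λ > 0, η > 0 with ηλ ≤ 1. Let (θ^k)_{k≥1} and (c^k)_{k≥1} be sequences in ℝ^d with θ^{k+1} = θ^k − η(sign(c^k) + λθ^k) for all k ≥ 1, where sign acts componentwise with sign(0) = 0. If ‖θ¹‖_∞ ≤ 1/λ, then ‖θ^k‖_∞ ≤ 1/λ for every k ≥ 1. -/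
open MeasureTheory Real Finset

local notation "⟪" x ", " y "⟫" => @inner ℝ _ _ x y

/-!
The update rewrites as `θ - η • (s + λ • θ) = (1 - ηλ) • θ + ηλ • (-λ⁻¹ • s)`, a convex combination
(because `0 ≤ ηλ ≤ 1`) of `θ` and `-λ⁻¹ • s`. In the ℓ∞ norm a sign vector has norm at most `1`, so
both points lie in the closed ball of radius `1/λ`, and by convexity so does the new iterate.
-/

theorem norm_sub_smul_add_smul_le {E : Type*} [SeminormedAddCommGroup E] [NormedSpace ℝ E]
    {lam η : ℝ} (hlam : 0 < lam) (hη : 0 ≤ η) (hηlam : η * lam ≤ 1) {x s : E}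
    (hx : ‖x‖ ≤ 1 / lam) (hs : ‖s‖ ≤ 1) :
    ‖x - η • (s + lam • x)‖ ≤ 1 / lam := by
  have hy : ‖-(lam⁻¹ • s)‖ ≤ 1 / lam := by
    rw [norm_neg, norm_smul, Real.norm_of_nonneg (inv_nonneg.2 hlam.le), one_div]
    exact mul_le_of_le_one_right (inv_nonneg.2 hlam.le) hs
  have hcombo : x - η • (s + lam • x) = (1 - η * lam) • x + (η * lam) • -(lam⁻¹ • s) := by
    rw [smul_neg, smul_smul, mul_assoc, mul_inv_cancel₀ hlam.ne', mul_one, sub_smul, one_smul,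
      smul_add, smul_smul]
    abel
  rw [hcombo, ← mem_closedBall_zero_iff] at *
  exact convex_closedBall 0 _ hx hy (sub_nonneg.2 hηlam) (mul_nonneg hη hlam.le) (by ring)

theorem Real.abs_sign_le_one (r : ℝ) : |Real.sign r| ≤ 1 := by
  rcases Real.sign_apply_eq r with h | h | h <;> simp [h]

theorem linfNorm_signVec_le_one {d : ℕ} (x : EuclideanSpace ℝ (Fin d)) :
    linfNorm (signVec x) ≤ 1 :=
  (pi_norm_le_iff_of_nonneg zero_le_one).2 fun i => by
    simpa [signVec] using Real.abs_sign_le_one (x i)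

theorem linfNorm_lion_step_le {d : ℕ} {lam η : ℝ} (hlam : 0 < lam) (hη : 0 ≤ η)
    (hηlam : η * lam ≤ 1) {θ : EuclideanSpace ℝ (Fin d)} (c : EuclideanSpace ℝ (Fin d))
    (hθ : linfNorm θ ≤ 1 / lam) :
    linfNorm (θ - η • (signVec c + lam • θ)) ≤ 1 / lam := by
  unfold linfNorm at *
  simpa only [map_sub, map_smul, map_add] using
    norm_sub_smul_add_smul_le hlam hη hηlam hθ (linfNorm_signVec_le_one c)

theorem lion_iterates_stay_in_box {d : ℕ} (lam η : ℝ) (hlam : 0 < lam) (hη : 0 < η)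
    (hηlam : η * lam ≤ 1) (θ c : ℕ → EuclideanSpace ℝ (Fin d))
    (hupd : ∀ k, 1 ≤ k → θ (k + 1) = θ k - η • (signVec (c k) + lam • θ k))
    (h1 : linfNorm (θ 1) ≤ 1 / lam) :
    ∀ k, 1 ≤ k → linfNorm (θ k) ≤ 1 / lam := by
  intro k hk
  induction k, hk using Nat.le_induction with
  | base => exact h1
  | succ k hk ih =>
    rw [hupd k hk]
    exact linfNorm_lion_step_le hlam hη.le hηlam (c k) ih
end

section
/- For all real numbers g and c, |g| · |sign(c) − sign(g)| ≤ 2|g − c|, where sign(t) = 1 for t > 0, −1 for t < 0, and 0 for t = 0. -/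
theorem abs_mul_abs_sign_sub_sign_le (g c : ℝ) :
    |g| * |Real.sign c - Real.sign g| ≤ 2 * |g - c| := by
  rcases lt_trichotomy g 0 with hg | hg | hg <;>
  rcases lt_trichotomy c 0 with hc | hc | hc <;>
  simp_all [Real.sign_of_pos, Real.sign_of_neg, Real.sign_zero, abs_of_pos, abs_of_neg] <;>
  first
    | linarith
    | (rw [abs_of_pos (by linarith : (0:ℝ) < g - c)]; linarith)
    | (rw [abs_of_neg (by linarith : g - c < 0)]; linarith)
end

section
/- Let f : ℝ^d → ℝ be differentiable with L-Lipschitz gradient, let λ > 0, η > 0, and let θ, c ∈ ℝ^d with ‖θ‖_∞ ≤ 1/λ. Set θ⁺ = θ − η(sign(c) + λθ), where sign acts componentwise with sign(0) = 0. Then f(θ⁺) − f(θ) ≤ −ηλ⟨∇f(θ), θ⟩ − η‖∇f(θ)‖₁ + 2η‖c − ∇f(θ)‖₁ + 2dLη², and hence also f(θ⁺) − f(θ) ≤ −ηλ⟨∇f(θ), θ⟩ − η‖∇f(θ)‖₁ + 2η√d‖c − ∇f(θ)‖₂ + 2dLη². -/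
/-!
The descent lemma for an `L`-smooth `f` bounds `f θ⁺ - f θ` by `⟪∇f θ, θ⁺ - θ⟫ + L/2 ‖θ⁺ - θ‖²`.
Every coordinate of `sign c + λθ` lies in `[-2, 2]` because `‖θ‖_∞ ≤ 1/λ`, so the quadratic
term is at most `2dLη²`. In the linear term, the sign of `c` is compared with that of `∇f θ`
coordinatewise: `|g| - g sign c = (|g| - |c|) + (c - g) sign c ≤ 2|c - g|`.
Cauchy–Schwarz, `‖x‖₁ ≤ √d ‖x‖₂`, gives the second bound.
-/

open MeasureTheory Real Finset

local notation "⟪" x ", " y "⟫" => @inner ℝ _ _ x y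

namespace Real

lemma self_mul_sign (r : ℝ) : r * sign r = |r| := by
  rcases lt_trichotomy r 0 with h | rfl | h
  · simp [sign_of_neg h, abs_of_neg h]
  · simp
  · simp [sign_of_pos h, abs_of_pos h]

lemma abs_sign_le_one_s7 (r : ℝ) : |sign r| ≤ 1 := by
  rcases sign_apply_eq r with h | h | h <;> simp [h]

lemma abs_sub_mul_sign_le (g c : ℝ) : |g| - g * sign c ≤ 2 * |c - g| := by
  have hc : (c - g) * sign c ≤ |c - g| :=
    calc (c - g) * sign c ≤ |c - g| * |sign c| := (le_abs_self _).trans (abs_mul _ _).le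
      _ ≤ |c - g| := mul_le_of_le_one_right (abs_nonneg _) (abs_sign_le_one_s7 c)
  calc |g| - g * sign c = (|g| - |c|) + (c - g) * sign c := by rw [← self_mul_sign c]; ring
    _ ≤ |g - c| + |c - g| := add_le_add (abs_sub_abs_le_abs_sub g c) hc
    _ = 2 * |c - g| := by rw [abs_sub_comm]; ring

end Real

lemma nonneg_of_forall_norm_sub_le_mul {E F : Type*} [NormedAddCommGroup E] [Nontrivial E]
    [SeminormedAddCommGroup F] {g : E → F} {L : ℝ}
    (h : ∀ x y, ‖g x - g y‖ ≤ L * ‖x - y‖) : 0 ≤ L := by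
  obtain ⟨x, hx⟩ := exists_ne (0 : E)
  have hLx : 0 ≤ L * ‖x‖ := by simpa using (norm_nonneg _).trans (h x 0)
  exact nonneg_of_mul_nonneg_left hLx (norm_pos_iff.2 hx)

section Descent

variable {E : Type*} [NormedAddCommGroup E] [InnerProductSpace ℝ E] [CompleteSpace E]
  {f : E → ℝ}

lemma hasDerivAt_comp_add_smul (hf : Differentiable ℝ f) (x v : E) (t : ℝ) :
    HasDerivAt (fun s : ℝ => f (x + s • v)) ⟪gradient f (x + t • v), v⟫ t := by
  have hline : HasDerivAt (fun s : ℝ => x + s • v) v t := by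
    simpa using ((hasDerivAt_id t).smul_const v).const_add x
  rw [inner_gradient_left]
  exact (hf _).hasFDerivAt.comp_hasDerivAt t hline

lemma inner_gradient_add_smul_le {L : ℝ}
    (hL : ∀ x y, ‖gradient f x - gradient f y‖ ≤ L * ‖x - y‖) (x v : E) {t : ℝ} (ht : 0 ≤ t) :
    ⟪gradient f (x + t • v), v⟫ ≤ ⟪gradient f x, v⟫ + L * t * ‖v‖ ^ 2 := by
  have hdiff : ⟪gradient f (x + t • v) - gradient f x, v⟫ ≤ L * t * ‖v‖ ^ 2 :=
    calc _ ≤ ‖gradient f (x + t • v) - gradient f x‖ * ‖v‖ := real_inner_le_norm _ _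
      _ ≤ L * ‖t • v‖ * ‖v‖ := by gcongr; simpa using hL (x + t • v) x
      _ = L * t * ‖v‖ ^ 2 := by rw [norm_smul, norm_of_nonneg ht]; ring
  rw [inner_sub_left] at hdiff
  linarith

lemma apply_add_le_of_lipschitz_gradient {L : ℝ} (hf : Differentiable ℝ f)
    (hL : ∀ x y, ‖gradient f x - gradient f y‖ ≤ L * ‖x - y‖) (x v : E) :
    f (x + v) ≤ f x + ⟪gradient f x, v⟫ + L / 2 * ‖v‖ ^ 2 := by
  set B : ℝ → ℝ := fun t => f x + t * ⟪gradient f x, v⟫ + L / 2 * t ^ 2 * ‖v‖ ^ 2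
  have hB : ∀ t, HasDerivAt B (⟪gradient f x, v⟫ + L * t * ‖v‖ ^ 2) t := by
    intro t
    refine ((((hasDerivAt_id t).mul_const ⟪gradient f x, v⟫).const_add (f x)).add
      (((hasDerivAt_pow 2 t).const_mul (L / 2)).mul_const (‖v‖ ^ 2))).congr_deriv ?_
    ring
  have hbelow := image_le_of_deriv_right_le_deriv_boundary (a := 0) (b := 1)
    (fun t _ => (hasDerivAt_comp_add_smul hf x v t).continuousAt.continuousWithinAt)
    (fun t _ => (hasDerivAt_comp_add_smul hf x v t).hasDerivWithinAt) (by simp [B])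
    (fun t _ => (hB t).continuousAt.continuousWithinAt) (fun t _ => (hB t).hasDerivWithinAt)
    (fun t ht => inner_gradient_add_smul_le hL x v ht.1) ⟨zero_le_one, le_rfl⟩
  simpa [B] using hbelow

end Descent

lemma EuclideanSpace.norm_sq_le_card_mul_sq {ι : Type*} [Fintype ι] {x : EuclideanSpace ℝ ι}
    {M : ℝ} (hx : ∀ i, |x i| ≤ M) : ‖x‖ ^ 2 ≤ Fintype.card ι * M ^ 2 := by
  rw [EuclideanSpace.real_norm_sq_eq]
  calc ∑ i, x i ^ 2 ≤ ∑ _i : ι, M ^ 2 :=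
        sum_le_sum fun i _ => sq_le_sq.2 ((hx i).trans (le_abs_self M))
    _ = Fintype.card ι * M ^ 2 := by simp

section Coordinates

variable {d : ℕ}

lemma abs_apply_le_linfNorm (x : EuclideanSpace ℝ (Fin d)) (i : Fin d) : |x i| ≤ linfNorm x :=
  norm_le_pi_norm (EuclideanSpace.equiv (Fin d) ℝ x) i

lemma l1Norm_le_sqrt_mul_norm (x : EuclideanSpace ℝ (Fin d)) : l1Norm x ≤ √d * ‖x‖ := by
  simpa [l1Norm, EuclideanSpace.norm_eq] using
    Real.sum_mul_le_sqrt_mul_sqrt univ (fun _ => (1 : ℝ)) (fun i => |x i|)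

lemma l1Norm_sub_inner_signVec_le (g c : EuclideanSpace ℝ (Fin d)) :
    l1Norm g - ⟪g, signVec c⟫ ≤ 2 * l1Norm (c - g) := by
  have hinner : ⟪g, signVec c⟫ = ∑ i, g i * Real.sign (c i) := by
    simp [PiLp.inner_apply, signVec, mul_comm]
  rw [hinner, l1Norm, l1Norm, mul_sum, ← sum_sub_distrib]
  exact sum_le_sum fun i _ => abs_sub_mul_sign_le (g i) (c i)

lemma norm_sq_signVec_add_smul_le {lam : ℝ} (hlam : 0 < lam) {θ : EuclideanSpace ℝ (Fin d)}
    (hθ : linfNorm θ ≤ 1 / lam) (c : EuclideanSpace ℝ (Fin d)) :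
    ‖signVec c + lam • θ‖ ^ 2 ≤ 4 * d := by
  have hcoord : ∀ i, |(signVec c + lam • θ) i| ≤ 2 := by
    intro i
    have hθi : |lam * θ i| ≤ 1 := by
      rw [abs_mul, abs_of_pos hlam, ← le_div_iff₀' hlam]
      exact (abs_apply_le_linfNorm θ i).trans hθ
    calc |(signVec c + lam • θ) i| = |Real.sign (c i) + lam * θ i| := rfl
      _ ≤ |Real.sign (c i)| + |lam * θ i| := abs_add_le _ _
      _ ≤ 2 := by linarith [abs_sign_le_one_s7 (c i)]
  have := EuclideanSpace.norm_sq_le_card_mul_sq hcoord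
  simp only [Fintype.card_fin] at this
  linarith

end Coordinates

theorem lion_one_step_descent {d : ℕ} (f : EuclideanSpace ℝ (Fin d) → ℝ) (L : ℝ)
    (hf : Differentiable ℝ f)
    (hL : ∀ x y, ‖gradient f x - gradient f y‖ ≤ L * ‖x - y‖)
    (lam η : ℝ) (hlam : 0 < lam) (hη : 0 < η)
    (θ c : EuclideanSpace ℝ (Fin d)) (hθ : linfNorm θ ≤ 1 / lam) :
    f (θ - η • (signVec c + lam • θ)) - f θ ≤
        -(η * lam) * ⟪gradient f θ, θ⟫ - η * l1Norm (gradient f θ)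
          + 2 * η * l1Norm (c - gradient f θ) + 2 * d * L * η ^ 2 ∧
      f (θ - η • (signVec c + lam • θ)) - f θ ≤
        -(η * lam) * ⟪gradient f θ, θ⟫ - η * l1Norm (gradient f θ)
          + 2 * η * Real.sqrt d * ‖c - gradient f θ‖ + 2 * d * L * η ^ 2 := by
  set g := gradient f θ
  set w := signVec c + lam • θ
  have hdesc := apply_add_le_of_lipschitz_gradient hf hL θ (-(η • w))
  rw [← sub_eq_add_neg] at hdesc
  have hinner : ⟪g, -(η • w)⟫ = -(η * lam) * ⟪g, θ⟫ - η * ⟪g, signVec c⟫ := by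
    simp only [w, inner_neg_right, real_inner_smul_right, inner_add_right]
    ring
  have hsign := mul_le_mul_of_nonneg_left (l1Norm_sub_inner_signVec_le g c) hη.le
  have hquad : L / 2 * ‖-(η • w)‖ ^ 2 ≤ 2 * d * L * η ^ 2 := by
    -- `hL` forces `0 ≤ L` only when `ℝ^d` is nontrivial.
    rcases Nat.eq_zero_or_pos d with rfl | hd
    · simp [Subsingleton.elim w 0]
    · have : Nonempty (Fin d) := Fin.pos_iff_nonempty.1 hd
      have hL0 := nonneg_of_forall_norm_sub_le_mul hL
      rw [norm_neg, norm_smul, mul_pow, norm_of_nonneg hη.le]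
      calc L / 2 * (η ^ 2 * ‖w‖ ^ 2) ≤ L / 2 * (η ^ 2 * (4 * d)) := by
            gcongr
            exact norm_sq_signVec_add_smul_le hlam hθ c
        _ = 2 * d * L * η ^ 2 := by ring
  have hfirst : f (θ - η • w) - f θ ≤
      -(η * lam) * ⟪g, θ⟫ - η * l1Norm g + 2 * η * l1Norm (c - g) + 2 * d * L * η ^ 2 := by
    linarith
  refine ⟨hfirst, hfirst.trans ?_⟩
  have hl1 := mul_le_mul_of_nonneg_left (l1Norm_le_sqrt_mul_norm (c - g)) hη.le
  linarith
end

section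
/- Let f : ℝ^d → ℝ be differentiable, β₁, β₂ ∈ ℝ, and let sequences (g^k), (m^k), (c^k), (θ^k) in ℝ^d satisfy c^k = β₁ m^{k-1} + (1−β₁) g^k and m^k = β₂ m^{k-1} + (1−β₂) g^k for all k. Define δ^k = c^k − ∇f(θ^k) and ξ^k = g^k − ∇f(θ^k). Then for every k ≥ 1: δ^k = β₂^{k-1} δ¹ − β₁ Σ_{t=2}^{k} β₂^{k-t} (∇f(θ^t) − ∇f(θ^{t-1})) + (β₁ − β₂) Σ_{t=2}^{k} β₂^{k-t} ξ^{t-1} + (1 − β₁) Σ_{t=2}^{k} β₂^{k-t} ξ^t. -/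
open MeasureTheory Real Finset

local notation "⟪" x ", " y "⟫" => @inner ℝ _ _ x y

lemma sum_step {E : Type*} [AddCommGroup E] [Module ℝ E] (β : ℝ) (v : ℕ → E) (n : ℕ)
    (hn : 1 ≤ n) :
    ∑ t ∈ Finset.Icc 2 (n + 1), β ^ (n + 1 - t) • v t
      = β • ∑ t ∈ Finset.Icc 2 n, β ^ (n - t) • v t + v (n + 1) := by
  rw [Finset.sum_Icc_succ_top (by omega : 2 ≤ n + 1), Finset.smul_sum]
  congr 1
  · refine Finset.sum_congr rfl fun t ht => ?_
    simp only [Finset.mem_Icc] at ht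
    have ht' : n + 1 - t = (n - t) + 1 := by omega
    rw [smul_smul, ← pow_succ', ht']
  · simp

theorem lion_delta_unrolled {d : ℕ} (f : EuclideanSpace ℝ (Fin d) → ℝ)
    (hf : Differentiable ℝ f) (β₁ β₂ : ℝ)
    (g m c θ : ℕ → EuclideanSpace ℝ (Fin d))
    (hc : ∀ k, 1 ≤ k → c k = β₁ • m (k - 1) + (1 - β₁) • g k)
    (hm : ∀ k, 1 ≤ k → m k = β₂ • m (k - 1) + (1 - β₂) • g k) :
    ∀ k, 1 ≤ k →
      c k - gradient f (θ k) =
        β₂ ^ (k - 1) • (c 1 - gradient f (θ 1))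
          - β₁ • ∑ t ∈ Finset.Icc 2 k,
              β₂ ^ (k - t) • (gradient f (θ t) - gradient f (θ (t - 1)))
          + (β₁ - β₂) • ∑ t ∈ Finset.Icc 2 k,
              β₂ ^ (k - t) • (g (t - 1) - gradient f (θ (t - 1)))
          + (1 - β₁) • ∑ t ∈ Finset.Icc 2 k,
              β₂ ^ (k - t) • (g t - gradient f (θ t)) := by
  intro k hk
  induction k, hk using Nat.le_induction with
  | base => simp
  | succ n hn ih =>
    have h1 := hc (n + 1) (by omega)
    simp only [Nat.add_sub_cancel] at h1
    have h2 := hm n hn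
    have h3 := hc n hn
    have hrec : c (n + 1) - gradient f (θ (n + 1))
        = β₂ • (c n - gradient f (θ n))
          - β₁ • (gradient f (θ (n + 1)) - gradient f (θ n))
          + (β₁ - β₂) • (g n - gradient f (θ n))
          + (1 - β₁) • (g (n + 1) - gradient f (θ (n + 1))) := by
      rw [h1, h2, h3]; module
    rw [hrec, ih, Nat.add_sub_cancel,
      sum_step β₂ (fun t => gradient f (θ t) - gradient f (θ (t - 1))) n hn,
      sum_step β₂ (fun t => g (t - 1) - gradient f (θ (t - 1))) n hn,
      sum_step β₂ (fun t => g t - gradient f (θ t)) n hn]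
    have hp : β₂ ^ n = β₂ * β₂ ^ (n - 1) := by
      rw [← pow_succ']; congr 1; omega
    simp only [Nat.add_sub_cancel]
    rw [hp]
    module
end
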